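/- Let d, N ≥ 1 and let f : {0,1}^d → ℤ satisfy |f(u) − f(v)| ≤ 1 whenever u and v differ in exactly one coordinate. Let F : {0,…,N}^d → ℚ be the multilinear interpolation of f. Then for all a, b ∈ {0,…,N}^d that differ by 1 in exactly one coordinate, |F(a) − F(b)| ≤ 1/N. -/

import Mathlib

/-!
The interpolation is affine in each coordinate separately: with all coordinates but the `j`-th
fixed, `F = (1 - t) G₀ + t G₁` for `t = a_j / N`, where `G_e` interpolates `f` on the face
`ε_j = e`. A unit step in coordinate `j` therefore changes `F` by `±(G₁ - G₀) / N`, and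
`G₁ - G₀` interpolates the differences of `f` along the `j`-edges of the cube: a convex
combination of numbers in `[-1, 1]`.
-/

noncomputable section

/-- The multilinear interpolation of `f : {0,1}^d → ℤ` on the grid `{0,…,N}^d`:
`F(a) = Σ_{ε ∈ {0,1}^d} (Π_i w_i) · f(ε)` with `w_i = a_i/N` if `ε_i = 1` and
`w_i = 1 − a_i/N` if `ε_i = 0`. -/
def interp (d N : ℕ) (f : (Fin d → Bool) → ℤ) (a : Fin d → ℕ) : ℚ :=
  ∑ ε : Fin d → Bool,
    (∏ i : Fin d, (if ε i then (a i : ℚ) / N else 1 - (a i : ℚ) / N)) * (f ε : ℚ)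

/-- Two vertices of the discrete cube differ in exactly one coordinate. -/
def CubeAdj {d : ℕ} (u v : Fin d → Bool) : Prop :=
  ∃ j, u j ≠ v j ∧ ∀ k, k ≠ j → u k = v k

/-- Two grid points differ by `1` in exactly one coordinate. -/
def GridAdj {d : ℕ} (a b : Fin d → ℕ) : Prop :=
  ∃ j, (a j = b j + 1 ∨ b j = a j + 1) ∧ ∀ k, k ≠ j → a k = b k

variable {ι R : Type*} [Fintype ι]

section CommRing

variable [CommRing R]

def cubeWeight (x : ι → R) (ε : ι → Bool) : R :=
  ∏ i, if ε i then x i else 1 - x i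

variable [DecidableEq ι]

def cubeInterp (x : ι → R) (g : (ι → Bool) → R) : R :=
  ∑ ε, cubeWeight x ε * g ε

theorem sum_cubeWeight (x : ι → R) : ∑ ε, cubeWeight x ε = 1 := by
  simp only [cubeWeight, ← Fintype.prod_sum fun i (e : Bool) => if e then x i else 1 - x i]
  simp

theorem cubeInterp_sub (x : ι → R) (g h : (ι → Bool) → R) :
    cubeInterp x (fun ε => g ε - h ε) = cubeInterp x g - cubeInterp x h := by
  simp only [cubeInterp, mul_sub, Finset.sum_sub_distrib]

theorem cubeWeight_funSplitAt_symm (x : ι → R) (j : ι) (e : Bool)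
    (δ : {i // i ≠ j} → Bool) :
    cubeWeight x ((Equiv.funSplitAt j Bool).symm (e, δ)) =
      (if e then x j else 1 - x j) * cubeWeight (fun i : {i // i ≠ j} => x i) δ := by
  rw [cubeWeight, Fintype.prod_eq_mul_prod_subtype_ne _ j]
  simp only [Equiv.funSplitAt_symm_apply, dif_pos]
  exact congrArg _ (Finset.prod_congr rfl fun i _ => by rw [dif_neg i.2])

theorem cubeInterp_eq_funSplitAt (x : ι → R) (g : (ι → Bool) → R) (j : ι) :
    cubeInterp x g =
      (1 - x j) * cubeInterp (fun i : {i // i ≠ j} => x i)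
          (fun δ => g ((Equiv.funSplitAt j Bool).symm (false, δ))) +
        x j * cubeInterp (fun i : {i // i ≠ j} => x i)
          (fun δ => g ((Equiv.funSplitAt j Bool).symm (true, δ))) := by
  rw [cubeInterp, ← (Equiv.funSplitAt j Bool).symm.sum_comp, Fintype.sum_prod_type,
    Fintype.sum_bool, add_comm]
  simp only [cubeWeight_funSplitAt_symm, cubeInterp, Finset.mul_sum, if_true, if_false,
    Bool.false_eq_true, mul_assoc]

theorem cubeInterp_sub_of_eq_off (g : (ι → Bool) → R) {x y : ι → R} (j : ι)
    (hxy : ∀ i, i ≠ j → x i = y i) :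
    cubeInterp x g - cubeInterp y g =
      (x j - y j) * cubeInterp (fun i : {i // i ≠ j} => x i)
        (fun δ => g ((Equiv.funSplitAt j Bool).symm (true, δ)) -
          g ((Equiv.funSplitAt j Bool).symm (false, δ))) := by
  have hrest : (fun i : {i // i ≠ j} => y i) = fun i : {i // i ≠ j} => x i :=
    funext fun i => (hxy i i.2).symm
  rw [cubeInterp_eq_funSplitAt x, cubeInterp_eq_funSplitAt y, hrest, cubeInterp_sub]
  ring

end CommRing

section Ordered

variable [CommRing R] [LinearOrder R] [IsStrictOrderedRing R]

theorem cubeWeight_nonneg {x : ι → R} (hx : ∀ i, 0 ≤ x i ∧ x i ≤ 1) (ε : ι → Bool) :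
    0 ≤ cubeWeight x ε :=
  Finset.prod_nonneg fun i _ => by
    split_ifs
    · exact (hx i).1
    · exact sub_nonneg.mpr (hx i).2

theorem abs_cubeInterp_le [DecidableEq ι] {x : ι → R} (hx : ∀ i, 0 ≤ x i ∧ x i ≤ 1)
    {g : (ι → Bool) → R} {C : R} (hg : ∀ ε, |g ε| ≤ C) : |cubeInterp x g| ≤ C :=
  calc |cubeInterp x g| ≤ ∑ ε, |cubeWeight x ε * g ε| := Finset.abs_sum_le_sum_abs _ _
    _ = ∑ ε, cubeWeight x ε * |g ε| := by
        simp only [abs_mul, abs_of_nonneg (cubeWeight_nonneg hx _)]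
    _ ≤ ∑ ε, cubeWeight x ε * C :=
        Finset.sum_le_sum fun ε _ => mul_le_mul_of_nonneg_left (hg ε) (cubeWeight_nonneg hx ε)
    _ = C := by rw [← Finset.sum_mul, sum_cubeWeight, one_mul]

end Ordered

theorem cubeAdj_funSplitAt_symm {d : ℕ} (j : Fin d) (δ : {i // i ≠ j} → Bool) :
    CubeAdj ((Equiv.funSplitAt j Bool).symm (true, δ))
      ((Equiv.funSplitAt j Bool).symm (false, δ)) :=
  ⟨j, by simp, fun k hk => by simp [hk]⟩

theorem interp_eq_cubeInterp (d N : ℕ) (f : (Fin d → Bool) → ℤ) (a : Fin d → ℕ) :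
    interp d N f a = cubeInterp (fun i => (a i : ℚ) / N) (fun ε => (f ε : ℚ)) :=
  rfl

theorem interp_step_le_general {d N : ℕ} (hN : 1 ≤ N) (f : (Fin d → Bool) → ℤ)
    (hf : ∀ u v : Fin d → Bool, CubeAdj u v → |f u - f v| ≤ 1)
    (a b : Fin d → ℕ) (ha : ∀ i, a i ≤ N) (hab : GridAdj a b) :
    |interp d N f a - interp d N f b| ≤ 1 / N := by
  obtain ⟨j, hj, hoff⟩ := hab
  have hN0 : (0 : ℚ) < N := by exact_mod_cast hN
  have hstep : |(a j : ℚ) / N - b j / N| = 1 / N := by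
    rw [← sub_div, abs_div, abs_of_pos hN0]
    rcases hj with h | h <;> simp [h]
  have hface : ∀ δ : {i // i ≠ j} → Bool,
      |(f ((Equiv.funSplitAt j Bool).symm (true, δ)) : ℚ) -
        f ((Equiv.funSplitAt j Bool).symm (false, δ))| ≤ 1 := fun δ => by
    exact_mod_cast hf _ _ (cubeAdj_funSplitAt_symm j δ)
  have hunit : ∀ i : {i // i ≠ j}, 0 ≤ (a i : ℚ) / N ∧ (a i : ℚ) / N ≤ 1 := fun i =>
    ⟨by positivity, (div_le_one hN0).mpr (by exact_mod_cast ha i)⟩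
  rw [interp_eq_cubeInterp, interp_eq_cubeInterp,
    cubeInterp_sub_of_eq_off _ j fun i hi => by simp [hoff i hi], abs_mul, hstep]
  exact mul_le_of_le_one_right (by positivity) (abs_cubeInterp_le hunit hface)

/-- **Statement 8.** If `f : {0,1}^d → ℤ` changes by at most `1` along each edge of the cube,
then its multilinear interpolation `F` on `{0,…,N}^d` changes by at most `1/N` along each
edge of the grid. -/
theorem interp_step_le {d N : ℕ} (hd : 1 ≤ d) (hN : 1 ≤ N) (f : (Fin d → Bool) → ℤ)
    (hf : ∀ u v : Fin d → Bool, CubeAdj u v → |f u - f v| ≤ 1)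
    (a b : Fin d → ℕ) (ha : ∀ i, a i ≤ N) (hb : ∀ i, b i ≤ N) (hab : GridAdj a b) :
    |interp d N f a - interp d N f b| ≤ 1 / N :=
  interp_step_le_general hN f hf a b ha hab
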